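/- arXiv:2011.13128 — 2 statements merged into one kernel-verified Lean document; each statement's English description precedes it below -/
import Mathlib

section
/- Let (X,d) be the metric space X = [0,∞) with d(x,y) = 0 if x = y, d(x,y) = 1/2^k if x ≠ y, ⌊x⌋ = ⌊y⌋ even, and x,y ∈ [L_{2k}, L_{2k+1}), and d(x,y) = 1 otherwise, where L_m = b_1+...+b_m, b_1 = 1, b_i = 2^{L_{i-1}}. Let f(x) = x + 1. Then for all distinct x, y ∈ (0,1) and all t ∈ (0, 1/2), limsup_{n→∞} (1/n)#{0 ≤ i < n : d(f^i x, f^i y) < t} = 1/2. -/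
/-!
For `x, y ∈ [0, 1)` distinct, `D (x + i) (y + i)` equals `(1/2)^k` when `i` is even and lies in the
block `[L_{2k}, L_{2k+1})`, and `1` otherwise. Hence for `0 < t ≤ 1` the times `i` with
`D (x + i) (y + i) < t` are the even times in the blocks with `(1/2)^k < t`: their density is
never much above `1/2`, and at `n = L_{2k+1} = L_{2k} + 2^{L_{2k}}` all but the first `L_{2k}`
(a vanishing fraction) of the even times below `n` are counted, so the density there tends to `1/2`.
-/

open Filter Set
open scoped Classical

/-- `Lseq m = b₁ + ⋯ + b_m` where `b₁ = 1`, `b_i = 2^(b₁+⋯+b_{i-1})`;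
equivalently `Lseq 0 = 0`, `Lseq (m+1) = Lseq m + 2 ^ Lseq m`. -/
def Lseq : ℕ → ℕ
  | 0 => 0
  | m + 1 => Lseq m + 2 ^ Lseq m

/-- `bseq i = 2 ^ (L_{i-1})`, so `bseq 1 = 1`. -/
def bseq (i : ℕ) : ℕ := 2 ^ Lseq (i - 1)

/-- The three-valued distance of Example 1. -/
noncomputable def D (x y : ℝ) : ℝ :=
  if x = y then 0
  else if h : ∃ k : ℕ, ⌊x⌋ = ⌊y⌋ ∧ Even ⌊x⌋ ∧
      x ∈ Set.Ico ((Lseq (2 * k) : ℝ)) ((Lseq (2 * k + 1) : ℝ)) ∧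
      y ∈ Set.Ico ((Lseq (2 * k) : ℝ)) ((Lseq (2 * k + 1) : ℝ))
  then (1 / 2 : ℝ) ^ h.choose else 1

open scoped Finset Topology

theorem Finset.card_filter_even_range (n : ℕ) : #{i ∈ Finset.range n | Even i} = (n + 1) / 2 := by
  induction n with
  | zero => rfl
  | succ n ih =>
    rw [Finset.range_add_one, Finset.filter_insert]
    split_ifs with h
    · rw [Finset.card_insert_of_notMem (by simp), ih]
      rw [Nat.even_iff] at h
      omega
    · rw [ih]
      rw [Nat.not_even_iff] at h
      omega

noncomputable def partialDensity (P : ℕ → Prop) [DecidablePred P] (n : ℕ) : ℝ :=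
  #{i ∈ Finset.range n | P i} / n

section partialDensity

variable {P : ℕ → Prop} [DecidablePred P]

theorem partialDensity_nonneg (n : ℕ) : 0 ≤ partialDensity P n := by
  unfold partialDensity; positivity

theorem partialDensity_le_of_forall_even (hP : ∀ i, P i → Even i) (n : ℕ) :
    partialDensity P n ≤ 1 / 2 + 1 / (2 * n) := by
  have hcard : (#{i ∈ Finset.range n | P i} : ℝ) ≤ (n + 1) / 2 := by
    calc (#{i ∈ Finset.range n | P i} : ℝ) ≤ ((n + 1) / 2 : ℕ) := by
          rw [← Finset.card_filter_even_range]
          exact_mod_cast Finset.card_le_card (Finset.monotone_filter_right _ fun i _ ↦ hP i)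
      _ ≤ (n + 1) / 2 := by
          rw [le_div_iff₀ two_pos]
          exact_mod_cast Nat.div_mul_le_self (n + 1) 2
  rcases n.eq_zero_or_pos with rfl | hn
  · simp [partialDensity]
  · calc partialDensity P n ≤ (n + 1) / 2 / n := by unfold partialDensity; gcongr
      _ = 1 / 2 + 1 / (2 * n) := by field_simp

/-- Only the even numbers below `a` can be missed, and there are at most `a` of them. -/
theorem one_half_sub_le_partialDensity {a b : ℕ} (hb : 0 < b)
    (hP : ∀ i ∈ Finset.Ico a b, Even i → P i) :
    1 / 2 - a / b ≤ partialDensity P b := by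
  have hsub : {i ∈ Finset.range b | Even i} ⊆ {i ∈ Finset.range b | P i} ∪ Finset.range a := by
    intro i hi
    simp only [Finset.mem_filter, Finset.mem_range, Finset.mem_union] at hi ⊢
    by_cases hia : i < a
    · exact Or.inr hia
    · exact Or.inl ⟨hi.1, hP i (Finset.mem_Ico.2 ⟨not_lt.1 hia, hi.1⟩) hi.2⟩
  have hcard : (b : ℝ) / 2 - a ≤ #{i ∈ Finset.range b | P i} := by
    have h := (Finset.card_le_card hsub).trans (Finset.card_union_le _ _)
    rw [Finset.card_filter_even_range, Finset.card_range] at h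
    have h' : (b : ℝ) ≤ 2 * (#{i ∈ Finset.range b | P i} + a) := by exact_mod_cast (by omega)
    linarith
  have hb' : (0 : ℝ) < b := by exact_mod_cast hb
  calc 1 / 2 - (a : ℝ) / b = (b / 2 - a) / b := by field_simp
    _ ≤ partialDensity P b := by unfold partialDensity; gcongr

theorem limsup_partialDensity_eq_one_half (hP : ∀ i, P i → Even i) {a b : ℕ → ℕ}
    (hb : Tendsto b atTop atTop) (hab : Tendsto (fun k ↦ (a k : ℝ) / b k) atTop (𝓝 0))
    (hPab : ∀ᶠ k in atTop, ∀ i ∈ Finset.Ico (a k) (b k), Even i → P i) :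
    limsup (partialDensity P) atTop = 1 / 2 := by
  have hupper : Tendsto (fun n : ℕ ↦ 1 / 2 + 1 / (2 * (n : ℝ))) atTop (𝓝 (1 / 2)) := by
    simpa using tendsto_const_nhds.add
      ((tendsto_natCast_atTop_atTop.const_mul_atTop (two_pos : (0 : ℝ) < 2)).inv_tendsto_atTop)
  have hlower : Tendsto (fun k ↦ 1 / 2 - (a k : ℝ) / b k) atTop (𝓝 (1 / 2)) := by
    simpa using tendsto_const_nhds.sub hab
  have hbdd : IsBoundedUnder (· ≤ ·) atTop (partialDensity P) :=
    hupper.isBoundedUnder_le.mono_le (.of_forall (partialDensity_le_of_forall_even hP))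
  have hsub : Tendsto (partialDensity P ∘ b) atTop (𝓝 (1 / 2)) := by
    refine tendsto_of_tendsto_of_tendsto_of_le_of_le' hlower (hupper.comp hb) ?_
      (.of_forall fun k ↦ partialDensity_le_of_forall_even hP (b k))
    filter_upwards [hPab, hb.eventually_gt_atTop 0] with k hk hbk
    exact one_half_sub_le_partialDensity hbk hk
  apply le_antisymm
  · calc limsup (partialDensity P) atTop
          ≤ limsup (fun n : ℕ ↦ 1 / 2 + 1 / (2 * (n : ℝ))) atTop :=
            limsup_le_limsup (.of_forall (partialDensity_le_of_forall_even hP))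
              (isCoboundedUnder_le_of_le atTop partialDensity_nonneg) hupper.isBoundedUnder_le
      _ = 1 / 2 := hupper.limsup_eq
  · calc 1 / 2 = limsup (partialDensity P ∘ b) atTop := hsub.limsup_eq.symm
      _ ≤ limsup (partialDensity P) atTop :=
        hb.limsup_comp_le_limsup (isCoboundedUnder_le_of_le _ partialDensity_nonneg) hbdd

end partialDensity

theorem Lseq_succ (m : ℕ) : Lseq (m + 1) = Lseq m + 2 ^ Lseq m := rfl

theorem Lseq_strictMono : StrictMono Lseq :=
  strictMono_nat_of_lt_succ fun m ↦ by simp [Lseq_succ]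

theorem Monotone.eq_of_mem_Ico_even_odd {f : ℕ → ℕ} (hf : Monotone f) {i k l : ℕ}
    (hk : i ∈ Finset.Ico (f (2 * k)) (f (2 * k + 1)))
    (hl : i ∈ Finset.Ico (f (2 * l)) (f (2 * l + 1))) : k = l := by
  rw [Finset.mem_Ico] at hk hl
  by_contra hne
  rcases Nat.lt_or_gt_of_ne hne with h | h
  · exact (hk.2.trans_le (hf (by omega : 2 * k + 1 ≤ 2 * l))).not_ge hl.1
  · exact (hl.2.trans_le (hf (by omega : 2 * l + 1 ≤ 2 * k))).not_ge hk.1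

theorem tendsto_natCast_div_add_two_pow :
    Tendsto (fun m : ℕ ↦ (m : ℝ) / (m + 2 ^ m)) atTop (𝓝 0) := by
  have h := tendsto_self_mul_const_pow_of_lt_one (r := 1 / 2) (by norm_num) (by norm_num)
  refine squeeze_zero (fun m ↦ by positivity) (fun m ↦ ?_) h
  calc (m : ℝ) / (m + 2 ^ m) ≤ m / 2 ^ m := by gcongr; linarith [m.cast_nonneg (α := ℝ)]
    _ = m * (1 / 2) ^ m := by rw [div_pow, one_pow, mul_one_div]

theorem tendsto_Lseq_even_div_Lseq_odd :
    Tendsto (fun k ↦ (Lseq (2 * k) : ℝ) / Lseq (2 * k + 1)) atTop (𝓝 0) := by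
  have hL : Tendsto (fun k ↦ Lseq (2 * k)) atTop atTop :=
    (Lseq_strictMono.comp fun _ _ h ↦ by omega).tendsto_atTop
  simpa [Function.comp_def, Lseq_succ] using tendsto_natCast_div_add_two_pow.comp hL

theorem floor_add_natCast_of_mem_Ico {x : ℝ} (hx : x ∈ Ico (0 : ℝ) 1) (i : ℕ) :
    ⌊x + i⌋ = i := by
  rw [Int.floor_add_natCast, Int.floor_eq_zero_iff.2 hx, zero_add]

theorem add_natCast_mem_Ico_iff {x : ℝ} (hx : x ∈ Ico (0 : ℝ) 1) {a b i : ℕ} :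
    x + i ∈ Ico (a : ℝ) b ↔ i ∈ Finset.Ico a b := by
  have h := floor_add_natCast_of_mem_Ico hx i
  rw [Set.mem_Ico, Finset.mem_Ico, ← Int.cast_natCast a, ← Int.cast_natCast b, ← Int.le_floor,
    ← Int.floor_lt, h]
  norm_cast

section shift

variable {x y : ℝ} {i : ℕ}

theorem D_cond_add_natCast_iff (hx : x ∈ Ico (0 : ℝ) 1) (hy : y ∈ Ico (0 : ℝ) 1) (a b : ℕ) :
    (⌊x + i⌋ = ⌊y + i⌋ ∧ Even ⌊x + i⌋ ∧ x + i ∈ Ico (a : ℝ) b ∧ y + i ∈ Ico (a : ℝ) b) ↔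
      Even i ∧ i ∈ Finset.Ico a b := by
  rw [floor_add_natCast_of_mem_Ico hx, floor_add_natCast_of_mem_Ico hy,
    add_natCast_mem_Ico_iff hx, add_natCast_mem_Ico_iff hy, Int.even_coe_nat]
  tauto

theorem D_add_natCast_of_mem (hx : x ∈ Ico (0 : ℝ) 1) (hy : y ∈ Ico (0 : ℝ) 1) (hxy : x ≠ y)
    {k : ℕ} (hi : Even i) (hk : i ∈ Finset.Ico (Lseq (2 * k)) (Lseq (2 * k + 1))) :
    D (x + i) (y + i) = (1 / 2) ^ k := by
  have hex : ∃ l : ℕ, ⌊x + i⌋ = ⌊y + i⌋ ∧ Even ⌊x + i⌋ ∧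
      x + i ∈ Ico (Lseq (2 * l) : ℝ) (Lseq (2 * l + 1)) ∧
      y + i ∈ Ico (Lseq (2 * l) : ℝ) (Lseq (2 * l + 1)) :=
    ⟨k, (D_cond_add_natCast_iff hx hy _ _).2 ⟨hi, hk⟩⟩
  rw [D, if_neg ((add_left_injective _).ne hxy), dif_pos hex]
  exact congrArg _ <| Lseq_strictMono.monotone.eq_of_mem_Ico_even_odd
    ((D_cond_add_natCast_iff hx hy _ _).1 hex.choose_spec).2 hk

theorem D_add_natCast_of_not_mem (hx : x ∈ Ico (0 : ℝ) 1) (hy : y ∈ Ico (0 : ℝ) 1) (hxy : x ≠ y)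
    (hi : ¬ ∃ k, Even i ∧ i ∈ Finset.Ico (Lseq (2 * k)) (Lseq (2 * k + 1))) :
    D (x + i) (y + i) = 1 := by
  rw [D, if_neg ((add_left_injective _).ne hxy), dif_neg]
  rintro ⟨k, hk⟩
  exact hi ⟨k, (D_cond_add_natCast_iff hx hy _ _).1 hk⟩

theorem D_add_natCast_lt_iff (hx : x ∈ Ico (0 : ℝ) 1) (hy : y ∈ Ico (0 : ℝ) 1) (hxy : x ≠ y)
    {t : ℝ} (ht : t ≤ 1) :
    D (x + i) (y + i) < t ↔
      Even i ∧ ∃ k, i ∈ Finset.Ico (Lseq (2 * k)) (Lseq (2 * k + 1)) ∧ (1 / 2 : ℝ) ^ k < t := by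
  by_cases h : ∃ k, Even i ∧ i ∈ Finset.Ico (Lseq (2 * k)) (Lseq (2 * k + 1))
  · obtain ⟨k, hi, hk⟩ := h
    rw [D_add_natCast_of_mem hx hy hxy hi hk]
    refine ⟨fun hlt ↦ ⟨hi, k, hk, hlt⟩, fun ⟨_, l, hl, hlt⟩ ↦ ?_⟩
    rwa [Lseq_strictMono.monotone.eq_of_mem_Ico_even_odd hk hl]
  · rw [D_add_natCast_of_not_mem hx hy hxy h]
    exact iff_of_false ht.not_gt fun ⟨hi, k, hk, _⟩ ↦ h ⟨k, hi, hk⟩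

end shift

/-- As in `stmt_14`, `(Finset.range n).filter (fun i : ℝ ↦ …)` elaborates through the monadic
coercion `Finset ℕ → Finset ℝ`, i.e. filters the image of `Finset.range n` in `ℝ`. -/
theorem card_filter_natCast_range (n : ℕ) (p : ℝ → Prop) [DecidablePred p] :
    #((Finset.range n).filter fun i : ℝ ↦ p i) = #((Finset.range n).filter fun i : ℕ ↦ p i) := by
  simp [Finset.filter_image, Finset.card_image_of_injective _ Nat.cast_injective]

theorem stmt_14 :
    ∀ x ∈ Set.Ioo (0 : ℝ) 1, ∀ y ∈ Set.Ioo (0 : ℝ) 1, x ≠ y →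
    ∀ t ∈ Set.Ioo (0 : ℝ) (1 / 2),
    Filter.limsup (fun n : ℕ =>
      (((Finset.range n).filter (fun i => D (x + i) (y + i) < t)).card : ℝ) / n)
      Filter.atTop = 1 / 2 := by
  intro x hx y hy hxy t ht
  set P : ℕ → Prop := fun i ↦
    Even i ∧ ∃ k, i ∈ Finset.Ico (Lseq (2 * k)) (Lseq (2 * k + 1)) ∧ (1 / 2 : ℝ) ^ k < t
  have hdensity : (fun n : ℕ ↦ (#((Finset.range n).filter fun i : ℝ ↦ D (x + i) (y + i) < t) : ℝ)
      / n) = partialDensity P := by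
    funext n
    rw [partialDensity, card_filter_natCast_range, Finset.filter_congr fun i _ ↦
      D_add_natCast_lt_iff (Ioo_subset_Ico_self hx) (Ioo_subset_Ico_self hy) hxy
        (ht.2.trans one_half_lt_one).le]
  obtain ⟨K, hK⟩ := exists_pow_lt_of_lt_one ht.1 one_half_lt_one
  rw [hdensity]
  refine limsup_partialDensity_eq_one_half (fun i (hi : P i) ↦ hi.1)
    (Lseq_strictMono.comp (f := fun k ↦ 2 * k + 1) fun _ _ h ↦ by dsimp only; omega).tendsto_atTop
    tendsto_Lseq_even_div_Lseq_odd ?_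
  filter_upwards [eventually_ge_atTop K] with k hk i hi heven
  exact ⟨heven, k, hi, (pow_le_pow_of_le_one (by norm_num) (by norm_num) hk).trans_lt hK⟩
end

section
/- Let X be a compact metric space and f : X → X continuous. For any N > 0 and any x, y ∈ X and ε > 0: if every iterate f^j (1 ≤ j ≤ N) satisfies the uniform continuity bound d(f^j u, f^j v) < ε whenever d(u,v) < s (for some s > 0 depending on ε), and limsup over subsequence densities gives F*(f^N, x, y, s) ≥ c > 0, then F*(f, x, y, ε) ≥ c/N. -/
open Filter Set
open scoped Classical

/-- Lower density of times `i < n` with `dist (f^[i] x) (f^[i] y) < t`. -/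
noncomputable def ldens {X : Type*} [MetricSpace X] (f : X → X) (x y : X) (t : ℝ) : ℝ :=
  Filter.liminf (fun n : ℕ =>
    (((Finset.range n).filter (fun i => dist (f^[i] x) (f^[i] y) < t)).card : ℝ) / n)
    Filter.atTop

/-- Upper density of times `i < n` with `dist (f^[i] x) (f^[i] y) < t`. -/
noncomputable def udens {X : Type*} [MetricSpace X] (f : X → X) (x y : X) (t : ℝ) : ℝ :=
  Filter.limsup (fun n : ℕ =>
    (((Finset.range n).filter (fun i => dist (f^[i] x) (f^[i] y) < t)).card : ℝ) / n)
    Filter.atTop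

/-- Lower density along the sequence of times `q i`. -/
noncomputable def ldensSeq {X : Type*} [MetricSpace X] (f : X → X) (q : ℕ → ℕ)
    (x y : X) (t : ℝ) : ℝ :=
  Filter.liminf (fun n : ℕ =>
    (((Finset.range n).filter (fun i => dist (f^[q i] x) (f^[q i] y) < t)).card : ℝ) / n)
    Filter.atTop

/-- Upper density along the sequence of times `q i`. -/
noncomputable def udensSeq {X : Type*} [MetricSpace X] (f : X → X) (q : ℕ → ℕ)
    (x y : X) (t : ℝ) : ℝ :=
  Filter.limsup (fun n : ℕ =>
    (((Finset.range n).filter (fun i => dist (f^[q i] x) (f^[q i] y) < t)).card : ℝ) / n)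
    Filter.atTop

/-!
If `f^[N]` brings `x` and `y` within `s` at time `i`, then `f` brings them within `ε` at time
`N * i + 1`. Hence the `s`-close times of `f^[N]` below `n` inject into the `ε`-close times of `f`
below `N * n + 1`, and since `(N * n + 1) / n → N` the upper density drops by at most a factor `N`.
-/

open Finset Topology

theorem limsup_le_mul_limsup_of_le_comp_add {u v e : ℕ → ℝ} {g : ℕ → ℕ} {K : ℝ} (hK : 0 ≤ K)
    (hg : Tendsto g atTop atTop) (he : Tendsto e atTop (𝓝 0))
    (hu : IsBoundedUnder (· ≥ ·) atTop u) (hv : IsBoundedUnder (· ≤ ·) atTop v)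
    (h : ∀ n, u n ≤ K * v (g n) + e n) :
    limsup u atTop ≤ K * limsup v atTop := by
  have hslack : ∀ δ > 0, limsup u atTop ≤ K * limsup v atTop + (K + 1) * δ := by
    intro δ hδ
    have hvg : ∀ᶠ n in atTop, v (g n) < limsup v atTop + δ :=
      hg.eventually (eventually_lt_of_limsup_lt (lt_add_of_pos_right _ hδ) hv)
    refine limsup_le_of_le hu.isCoboundedUnder_le ?_
    filter_upwards [hvg, he.eventually_lt_const hδ] with n hvn hen
    nlinarith [h n]
  refine le_of_forall_pos_le_add fun δ hδ => ?_
  have hK1 : 0 < K + 1 := by linarith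
  simpa [mul_div_cancel₀ _ hK1.ne'] using hslack (δ / (K + 1)) (by positivity)

theorem div_le_mul_div_add_div {A B N n r : ℕ} (hN : 0 < N) (hAB : A ≤ B)
    (hB : B ≤ N * n + r) :
    (A : ℝ) / n ≤ N * ((B : ℝ) / ↑(N * n + r)) + r / n := by
  rcases n.eq_zero_or_pos with rfl | hn
  · simp only [CharP.cast_eq_zero, div_zero, mul_zero, zero_add]
    positivity
  have hm : (0 : ℝ) < ↑(N * n + r) := by positivity
  set β := (B : ℝ) / ↑(N * n + r)
  have hβ : β ≤ 1 := div_le_one_of_le₀ (by exact_mod_cast hB) hm.le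
  rw [div_le_iff₀ (by positivity), add_mul, div_mul_cancel₀ _ (by positivity)]
  calc (A : ℝ) ≤ B := by exact_mod_cast hAB
    _ = ↑(N * n + r) * β := (mul_div_cancel₀ _ hm.ne').symm
    _ = N * β * n + r * β := by push_cast; ring
    _ ≤ N * β * n + r := by grw [mul_le_of_le_one_right r.cast_nonneg hβ]

noncomputable def upperDensity (p : ℕ → Prop) [DecidablePred p] : ℝ :=
  limsup (fun n : ℕ => (((range n).filter p).card : ℝ) / n) atTop

section Density

variable {p q : ℕ → Prop} [DecidablePred p] [DecidablePred q] {N r : ℕ}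

theorem card_filter_range_le_card_filter_range (hN : 0 < N) (hpq : ∀ i, p i → q (N * i + r))
    (n : ℕ) : ((range n).filter p).card ≤ ((range (N * n + r)).filter q).card := by
  refine card_le_card_of_injOn (fun i => N * i + r) (fun i hi => ?_) fun i _ j _ hij => ?_
  · simp only [coe_filter, Finset.mem_range, Set.mem_ofPred_eq] at hi ⊢
    exact ⟨Nat.add_lt_add_right (Nat.mul_lt_mul_of_pos_left hi.1 hN) r, hpq i hi.2⟩
  · simpa [hN.ne'] using hij

theorem card_filter_range_div_le_one (n : ℕ) : (((range n).filter q).card : ℝ) / n ≤ 1 := by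
  rcases n.eq_zero_or_pos with rfl | hn
  · simp
  · refine div_le_one_of_le₀ ?_ n.cast_nonneg
    exact_mod_cast (card_filter_le _ _).trans (card_range n).le

theorem upperDensity_le_mul (hN : 0 < N) (hpq : ∀ i, p i → q (N * i + r)) :
    upperDensity p ≤ N * upperDensity q := by
  refine limsup_le_mul_limsup_of_le_comp_add (g := fun n => N * n + r) (e := fun n => r / n)
    N.cast_nonneg ?_ (tendsto_const_div_atTop_nhds_zero_nat _)
    (isBoundedUnder_of ⟨0, fun n => by positivity⟩)
    (isBoundedUnder_of ⟨1, card_filter_range_div_le_one⟩) fun n => ?_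
  · exact tendsto_atTop_mono (fun n => (Nat.le_mul_of_pos_left n hN).trans (Nat.le_add_right _ _))
      tendsto_id
  · exact div_le_mul_div_add_div hN (card_filter_range_le_card_filter_range hN hpq n)
      ((card_filter_le _ _).trans (card_range _).le)

end Density

theorem stmt_19_general {X : Type*} [MetricSpace X]
    (f : X → X) (x y : X) (N : ℕ) (hN : 0 < N)
    (ε s c : ℝ)
    (hunif : ∀ j : ℕ, 1 ≤ j → j ≤ N → ∀ u v : X, dist u v < s →
      dist (f^[j] u) (f^[j] v) < ε)
    (hF : c ≤ udens (f^[N]) x y s) :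
    c / N ≤ udens f x y ε := by
  have hstep : ∀ i, dist ((f^[N])^[i] x) ((f^[N])^[i] y) < s →
      dist (f^[N * i + 1] x) (f^[N * i + 1] y) < ε := by
    intro i hi
    rw [← Function.iterate_mul] at hi
    have := hunif 1 le_rfl hN _ _ hi
    rw [Function.iterate_one] at this
    simpa only [Function.iterate_succ_apply'] using this
  rw [div_le_iff₀' (by exact_mod_cast hN)]
  exact hF.trans (upperDensity_le_mul hN hstep)

theorem stmt_19 {X : Type*} [MetricSpace X] [CompactSpace X]
    (f : X → X) (hf : Continuous f) (x y : X) (N : ℕ) (hN : 0 < N)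
    (ε s c : ℝ) (hε : 0 < ε) (hs : 0 < s) (hc : 0 < c)
    (hunif : ∀ j : ℕ, 1 ≤ j → j ≤ N → ∀ u v : X, dist u v < s →
      dist (f^[j] u) (f^[j] v) < ε)
    (hF : c ≤ udens (f^[N]) x y s) :
    c / N ≤ udens f x y ε :=
  stmt_19_general f x y N hN ε s c hunif hF
end
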